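/- Let p be a prime with p ≡ 7 or 13 (mod 15). Then there exist integers C and D such that p = N_3(a + bX + 5(X − 1)(CX + D)), where (a,b) = (2,3) if p ≡ 7 (mod 15) and (a,b) = (3,−1) if p ≡ 13 (mod 15). -/
import Mathlib

set_option maxHeartbeats 1000000

open Polynomial

/-- `Nnorm d F` is the product of `F` over the primitive `d`-th roots of unity in `ℂ`. -/
noncomputable def Nnorm (d : ℕ) (F : Polynomial ℤ) : ℂ :=
  ∏ j ∈ (Finset.range d).filter (fun j => Nat.gcd j d = 1),
    Polynomial.aeval (Complex.exp (2 * ↑Real.pi * Complex.I * (j : ℂ) / (d : ℂ))) F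

section Aux

lemma zeta_rel14 : (Complex.exp (2 * ↑Real.pi * Complex.I / 3)) ^ 2
    + Complex.exp (2 * ↑Real.pi * Complex.I / 3) + 1 = 0 := by
  set ζ := Complex.exp (2 * ↑Real.pi * Complex.I / 3) with hζ
  have hne : (2 * ↑Real.pi * Complex.I : ℂ) ≠ 0 := by
    apply mul_ne_zero (mul_ne_zero two_ne_zero _) Complex.I_ne_zero
    exact_mod_cast Real.pi_ne_zero
  have h3 : ζ ^ 3 = 1 := by
    rw [hζ, ← Complex.exp_nat_mul]
    rw [show ((3 : ℕ) : ℂ) * (2 * ↑Real.pi * Complex.I / 3) = 2 * ↑Real.pi * Complex.I by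
      push_cast; ring]
    exact Complex.exp_two_pi_mul_I
  have h1 : ζ ≠ 1 := by
    rw [hζ]
    intro heq
    rw [Complex.exp_eq_one_iff] at heq
    obtain ⟨n, hn⟩ := heq
    have h' : (2 * ↑Real.pi * Complex.I : ℂ) * (1 - 3 * n) = 0 := by
      linear_combination 3 * hn
    have h'' := (mul_eq_zero.mp h').resolve_left hne
    have : ((1 - 3 * n : ℤ) : ℂ) = 0 := by push_cast; linear_combination h''
    have := Int.cast_eq_zero.mp this
    omega
  have h4 : (ζ - 1) * (ζ ^ 2 + ζ + 1) = 0 := by linear_combination h3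
  rcases mul_eq_zero.mp h4 with h | h
  · exact absurd (sub_eq_zero.mp h) h1
  · exact h

lemma normB14 (a b c d x y : ℤ) (hx : x = a - 5 * (c + d)) (hy : y = b + 5 * (d - 2 * c)) :
    Nnorm 3 (C a + C b * X + C 5 * (X - 1) * (C c * X + C d))
      = ((x ^ 2 - x * y + y ^ 2 : ℤ) : ℂ) := by
  subst hx hy
  unfold Nnorm
  rw [show (Finset.range 3).filter (fun j => Nat.gcd j 3 = 1) = {1, 2} by decide]
  rw [Finset.prod_insert (by decide), Finset.prod_singleton]
  set ζ := Complex.exp (2 * ↑Real.pi * Complex.I / 3) with hζ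
  have e1 : Complex.exp (2 * ↑Real.pi * Complex.I * ((1 : ℕ) : ℂ) / ((3 : ℕ) : ℂ)) = ζ := by
    rw [hζ]; congr 1; push_cast; ring
  have e2 : Complex.exp (2 * ↑Real.pi * Complex.I * ((2 : ℕ) : ℂ) / ((3 : ℕ) : ℂ)) = ζ ^ 2 := by
    rw [hζ, ← Complex.exp_nat_mul]; congr 1; push_cast; ring
  rw [e1, e2]
  have hrel : ζ ^ 2 + ζ + 1 = 0 := zeta_rel14
  simp only [map_add, map_mul, map_sub, map_one, map_ofNat, map_intCast, aeval_X, aeval_C,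
    algebraMap_int_eq, eq_intCast]
  push_cast
  linear_combination (-50 * (d:ℂ)^2 + 25 * (d:ℂ)^2 * ζ + 75 * (c:ℂ) * d - 50 * (c:ℂ) * d * ζ
    - 25 * (c:ℂ) * d * ζ^2 + 25 * (c:ℂ) * d * ζ^3 - 75 * (c:ℂ)^2 + 75 * (c:ℂ)^2 * ζ
    - 50 * (c:ℂ)^2 * ζ^3 + 25 * (c:ℂ)^2 * ζ^4 - 15 * (b:ℂ) * d + 10 * (b:ℂ) * d * ζ
    + 15 * (b:ℂ) * c - 15 * (b:ℂ) * c * ζ + 5 * (b:ℂ) * c * ζ^3 - (b:ℂ)^2 + (b:ℂ)^2 * ζ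
    + 5 * (a:ℂ) * d - 5 * (a:ℂ) * c * ζ + 5 * (a:ℂ) * c * ζ^2 + (a:ℂ) * b) * hrel

lemma glueG14 (a b : ℤ) (p : ℕ) (x y : ℤ) (hn : x ^ 2 - x * y + y ^ 2 = (p : ℤ))
    (h1 : (5 : ℤ) ∣ a - x) (h2 : (5 : ℤ) ∣ y - b) (h3 : (15 : ℤ) ∣ a + b - x - y) :
    ∃ c d : ℤ, Nnorm 3 (C a + C b * X + C 5 * (X - 1) * (C c * X + C d)) = (p : ℂ) := by
  obtain ⟨s, hs⟩ := h1
  obtain ⟨t, ht⟩ := h2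
  have h9 : (3 : ℤ) ∣ s - t := by omega
  obtain ⟨e, he⟩ := h9
  refine ⟨e, s - e, ?_⟩
  rw [normB14 a b e (s - e) x y (by omega) (by omega), hn]
  push_cast
  ring

def Tmap14 {R : Type*} [CommRing R] (k : Fin 12) (x y : R) : R × R :=
  match k with
  | 0 => (x, y) | 1 => (-y, x - y) | 2 => (y - x, -x)
  | 3 => (-x, -y) | 4 => (y, y - x) | 5 => (x - y, x)
  | 6 => (y, x) | 7 => (-x, y - x) | 8 => (x - y, -y)
  | 9 => (-y, -x) | 10 => (x, x - y) | 11 => (y - x, y)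

lemma Tnorm14 (k : Fin 12) (x y : ℤ) :
    (Tmap14 k x y).1 ^ 2 - (Tmap14 k x y).1 * (Tmap14 k x y).2 + (Tmap14 k x y).2 ^ 2
      = x ^ 2 - x * y + y ^ 2 := by
  fin_cases k <;> simp [Tmap14] <;> ring

lemma Tcast14 (k : Fin 12) (x y : ℤ) :
    Tmap14 k (x : ZMod 15) (y : ZMod 15)
      = (((Tmap14 k x y).1 : ZMod 15), ((Tmap14 k x y).2 : ZMod 15)) := by
  fin_cases k <;> simp [Tmap14, Prod.ext_iff] <;> constructor <;> push_cast <;> ring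

lemma orbit7' : ∀ u v : ZMod 15, u ^ 2 - u * v + v ^ 2 = 7 →
    ∃ k : Fin 12, Tmap14 k u v = (2, 3) ∨ Tmap14 k u v = (7, 13) ∨ Tmap14 k u v = (12, 8) := by
  decide

lemma orbit13' : ∀ u v : ZMod 15, u ^ 2 - u * v + v ^ 2 = 13 →
    ∃ k : Fin 12, Tmap14 k u v = (3, 14) ∨ Tmap14 k u v = (8, 9) ∨ Tmap14 k u v = (13, 4) := by
  decide

lemma cast15_dvd (a c : ℤ) (h : ((a : ZMod 15)) = ((c : ℤ) : ZMod 15)) : (15 : ℤ) ∣ a - c := by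
  have : ((a - c : ℤ) : ZMod 15) = 0 := by push_cast; rw [h]; push_cast; ring
  exact (ZMod.intCast_zmod_eq_zero_iff_dvd _ _).mp this

lemma sqrt_neg_three14 (p : ℕ) (hp : p.Prime) (h3 : p % 3 = 1) : ∃ u : ZMod p, u ^ 2 = -3 := by
  haveI := Fact.mk hp
  haveI : Fact (Nat.Prime 3) := ⟨by norm_num⟩
  have hdvd : 3 ∣ Fintype.card (ZMod p)ˣ := by
    rw [ZMod.card_units p]; omega
  obtain ⟨z, hz⟩ := exists_prime_orderOf_dvd_card 3 hdvd
  have hz3 : (z : ZMod p) ^ 3 = 1 := by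
    have : z ^ 3 = 1 := by rw [← hz]; exact pow_orderOf_eq_one z
    simpa using congrArg Units.val this
  have hz1 : (z : ZMod p) ≠ 1 := by
    intro h
    have : z = 1 := Units.ext h
    rw [this, orderOf_one] at hz
    omega
  have hw : (z : ZMod p) ^ 2 + z + 1 = 0 := by
    have h4 : ((z : ZMod p) - 1) * ((z : ZMod p) ^ 2 + z + 1) = 0 := by linear_combination hz3
    exact (mul_eq_zero.mp h4).resolve_left (sub_ne_zero.mpr hz1)
  exact ⟨2 * z + 1, by linear_combination 4 * hw⟩

lemma rep14 (p : ℕ) (hp : p.Prime) (h3 : p % 3 = 1) : ∃ x y : ℤ, x ^ 2 - x * y + y ^ 2 = p := by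
  suffices h : ∃ x y : ℤ, x ^ 2 + 3 * y ^ 2 = p by
    obtain ⟨x, y, hxy⟩ := h
    exact ⟨x + y, 2 * y, by linear_combination hxy⟩
  haveI := Fact.mk hp
  obtain ⟨u, hu⟩ := sqrt_neg_three14 p hp h3
  set n := p.sqrt with hn
  have hlt : p < (n + 1) * (n + 1) := Nat.lt_succ_sqrt p
  have hns : n * n < p := by
    rcases Nat.lt_or_ge (n * n) p with h | h
    · exact h
    · exfalso
      have heq : n * n = p := le_antisymm (Nat.sqrt_le p) h
      have hd : n ∣ p := ⟨n, heq.symm⟩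
      rcases (Nat.Prime.eq_one_or_self_of_dvd hp n hd) with h1 | h1
      · rw [h1] at heq; have := hp.one_lt; omega
      · rw [h1] at heq; nlinarith [hp.one_lt]
  have hcard : Fintype.card (ZMod p) < Fintype.card (Fin (n + 1) × Fin (n + 1)) := by
    simp [ZMod.card]
    exact hlt
  obtain ⟨⟨a1, b1⟩, ⟨a2, b2⟩, hne, heq⟩ :=
    Fintype.exists_ne_map_eq_of_card_lt
      (fun q : Fin (n + 1) × Fin (n + 1) => ((q.1 : ℕ) : ZMod p) - u * ((q.2 : ℕ) : ZMod p))
      hcard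
  set A : ℤ := (a1 : ℕ) - (a2 : ℕ) with hA
  set B : ℤ := (b1 : ℕ) - (b2 : ℕ) with hB
  have hAB : (A : ZMod p) = u * (B : ZMod p) := by
    simp only [hA, hB]
    push_cast
    linear_combination heq
  have hmod : ((A ^ 2 + 3 * B ^ 2 : ℤ) : ZMod p) = 0 := by
    push_cast
    linear_combination ((A : ZMod p) + u * B) * hAB + (B : ZMod p) ^ 2 * hu
  have hdvd : (p : ℤ) ∣ A ^ 2 + 3 * B ^ 2 := by
    rwa [ZMod.intCast_zmod_eq_zero_iff_dvd] at hmod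
  have ha1 : (a1 : ℕ) ≤ n := Nat.lt_succ_iff.mp a1.isLt
  have ha2 : (a2 : ℕ) ≤ n := Nat.lt_succ_iff.mp a2.isLt
  have hb1 : (b1 : ℕ) ≤ n := Nat.lt_succ_iff.mp b1.isLt
  have hb2 : (b2 : ℕ) ≤ n := Nat.lt_succ_iff.mp b2.isLt
  have hA2 : A ^ 2 ≤ (n : ℤ) * n := by
    have h1 : -(n : ℤ) ≤ A := by omega
    have h2 : A ≤ (n : ℤ) := by omega
    nlinarith
  have hB2 : B ^ 2 ≤ (n : ℤ) * n := by
    have h1 : -(n : ℤ) ≤ B := by omega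
    have h2 : B ≤ (n : ℤ) := by omega
    nlinarith
  have hub : A ^ 2 + 3 * B ^ 2 < 4 * p := by
    have : (n : ℤ) * n < (p : ℤ) := by exact_mod_cast hns
    nlinarith
  have hABne : A ≠ 0 ∨ B ≠ 0 := by
    by_contra h
    push_neg at h
    apply hne
    have e1 : a1 = a2 := Fin.ext (by omega)
    have e2 : b1 = b2 := Fin.ext (by omega)
    rw [e1, e2]
  have hpos : 0 < A ^ 2 + 3 * B ^ 2 := by
    rcases hABne with h | h
    · have h1 : 0 < A ^ 2 := sq_pos_of_ne_zero h
      linarith [sq_nonneg B]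
    · have h1 : 0 < B ^ 2 := sq_pos_of_ne_zero h
      linarith [sq_nonneg A]
  obtain ⟨k, hk⟩ := hdvd
  have hppos : (0 : ℤ) < p := by exact_mod_cast hp.pos
  have hk4 : k = 1 ∨ k = 2 ∨ k = 3 := by
    have h0 : 0 < k := by
      rcases lt_trichotomy k 0 with h | h | h
      · nlinarith [hk ▸ hpos]
      · exfalso; rw [h, mul_zero] at hk; omega
      · exact h
    have h4 : k < 4 := by nlinarith [hk ▸ hub]
    omega
  have hodd : p % 2 = 1 := by
    rcases hp.eq_two_or_odd with h | h
    · omega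
    · exact h
  rcases hk4 with h | h | h
  · exact ⟨A, B, by rw [hk, h]; ring⟩
  · exfalso
    have hAB4 : A ^ 2 + 3 * B ^ 2 = (p : ℤ) * 2 := by rw [hk, h]
    have hc : (A : ZMod 4) ^ 2 + 3 * (B : ZMod 4) ^ 2 = ((p : ℕ) : ZMod 4) * 2 := by
      have := congrArg (Int.cast : ℤ → ZMod 4) hAB4
      push_cast at this
      linear_combination this
    have hp4 : p % 4 = 1 ∨ p % 4 = 3 := by omega
    have hpc : ((p : ℕ) : ZMod 4) = ((p % 4 : ℕ) : ZMod 4) := (ZMod.natCast_mod p 4).symm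
    have key : ∀ x y : ZMod 4, x ^ 2 + 3 * y ^ 2 ≠ 2 := by decide
    apply key (A : ZMod 4) (B : ZMod 4)
    rw [hc, hpc]
    rcases hp4 with h4 | h4 <;> rw [h4] <;> push_cast <;> decide
  · have h9 : A ^ 2 + 3 * B ^ 2 = 3 * (p : ℤ) := by rw [hk, h]; ring
    have h3A : (3 : ℤ) ∣ A ^ 2 := ⟨(p : ℤ) - B ^ 2, by linarith⟩
    have h3A' : (3 : ℤ) ∣ A := Int.prime_three.dvd_of_dvd_pow h3A
    obtain ⟨Z, hZ⟩ := h3A'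
    refine ⟨B, Z, ?_⟩
    have h9' : 3 * (B ^ 2 + 3 * Z ^ 2) = 3 * (p : ℤ) := by
      linear_combination h9 + (-A - 3 * Z) * hZ
    linarith

end Aux

theorem stmt14 (p : ℕ) (hp : Nat.Prime p) (hmod : p % 15 = 7 ∨ p % 15 = 13) :
    (p % 15 = 7 → ∃ c d : ℤ,
      Nnorm 3 (Polynomial.C 2 + Polynomial.C 3 * X
        + Polynomial.C 5 * (X - 1) * (Polynomial.C c * X + Polynomial.C d)) = (p : ℂ)) ∧
    (p % 15 = 13 → ∃ c d : ℤ,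
      Nnorm 3 (Polynomial.C 3 + Polynomial.C (-1) * X
        + Polynomial.C 5 * (X - 1) * (Polynomial.C c * X + Polynomial.C d)) = (p : ℂ)) := by
  constructor
  · intro h7
    have h3 : p % 3 = 1 := by omega
    obtain ⟨x, y, hxy⟩ := rep14 p hp h3
    have h15 : ((x : ZMod 15)) ^ 2 - (x : ZMod 15) * (y : ZMod 15) + (y : ZMod 15) ^ 2 = 7 := by
      have hc := congrArg (Int.cast : ℤ → ZMod 15) hxy
      push_cast at hc
      rw [hc, show ((p : ℕ) : ZMod 15) = ((p % 15 : ℕ) : ZMod 15) from (ZMod.natCast_mod p 15).symm,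
        h7]
      decide
    obtain ⟨k, hk⟩ := orbit7' _ _ h15
    rw [Tcast14] at hk
    have hnorm' : (Tmap14 k x y).1 ^ 2 - (Tmap14 k x y).1 * (Tmap14 k x y).2
        + (Tmap14 k x y).2 ^ 2 = (p : ℤ) := by rw [Tnorm14]; exact hxy
    rcases hk with h | h | h <;> rw [Prod.ext_iff] at h <;> obtain ⟨hx1, hy1⟩ := h
    · have d1 := cast15_dvd (Tmap14 k x y).1 2 (by exact_mod_cast hx1)
      have d2 := cast15_dvd (Tmap14 k x y).2 3 (by exact_mod_cast hy1)
      exact glueG14 2 3 p _ _ hnorm' (by omega) (by omega) (by omega)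
    · have d1 := cast15_dvd (Tmap14 k x y).1 7 (by exact_mod_cast hx1)
      have d2 := cast15_dvd (Tmap14 k x y).2 13 (by exact_mod_cast hy1)
      exact glueG14 2 3 p _ _ hnorm' (by omega) (by omega) (by omega)
    · have d1 := cast15_dvd (Tmap14 k x y).1 12 (by exact_mod_cast hx1)
      have d2 := cast15_dvd (Tmap14 k x y).2 8 (by exact_mod_cast hy1)
      exact glueG14 2 3 p _ _ hnorm' (by omega) (by omega) (by omega)
  · intro h13
    have h3 : p % 3 = 1 := by omega
    obtain ⟨x, y, hxy⟩ := rep14 p hp h3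
    have h15 : ((x : ZMod 15)) ^ 2 - (x : ZMod 15) * (y : ZMod 15) + (y : ZMod 15) ^ 2 = 13 := by
      have hc := congrArg (Int.cast : ℤ → ZMod 15) hxy
      push_cast at hc
      rw [hc, show ((p : ℕ) : ZMod 15) = ((p % 15 : ℕ) : ZMod 15) from (ZMod.natCast_mod p 15).symm,
        h13]
      decide
    obtain ⟨k, hk⟩ := orbit13' _ _ h15
    rw [Tcast14] at hk
    have hnorm' : (Tmap14 k x y).1 ^ 2 - (Tmap14 k x y).1 * (Tmap14 k x y).2
        + (Tmap14 k x y).2 ^ 2 = (p : ℤ) := by rw [Tnorm14]; exact hxy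
    rcases hk with h | h | h <;> rw [Prod.ext_iff] at h <;> obtain ⟨hx1, hy1⟩ := h
    · have d1 := cast15_dvd (Tmap14 k x y).1 3 (by exact_mod_cast hx1)
      have d2 := cast15_dvd (Tmap14 k x y).2 14 (by exact_mod_cast hy1)
      exact glueG14 3 (-1) p _ _ hnorm' (by omega) (by omega) (by omega)
    · have d1 := cast15_dvd (Tmap14 k x y).1 8 (by exact_mod_cast hx1)
      have d2 := cast15_dvd (Tmap14 k x y).2 9 (by exact_mod_cast hy1)
      exact glueG14 3 (-1) p _ _ hnorm' (by omega) (by omega) (by omega)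
    · have d1 := cast15_dvd (Tmap14 k x y).1 13 (by exact_mod_cast hx1)
      have d2 := cast15_dvd (Tmap14 k x y).2 4 (by exact_mod_cast hy1)
      exact glueG14 3 (-1) p _ _ hnorm' (by omega) (by omega) (by omega)
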